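/- arXiv:2211.02228 — 2 statements merged into one kernel-verified Lean document; each statement's English description precedes it below -/
import Mathlib

section
/- Let r ∈ ℝ^d be a probability vector with r_i > 0 for all i, let λ > 0, and let β ∈ ℝ^d with 0 ≤ β_i ≤ 1 for all i. Let s* be the tilted distribution s*_i = r_i exp(−β_i/λ)/Z with Z = ∑_j r_j exp(−β_j/λ). Then ∑_{i=1}^d s*_i β_i ≥ exp(−1/λ) · ∑_{i=1}^d r_i β_i. (This is the lower bound of Proposition 2, P̄_D(Π*₁) ≥ P_D(Π*₁)·e^{−1/λ}, in the commuting case.) -/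
open Finset Real

/-- Lower bound of Proposition 2 in the commuting case: the genuine detection rate under the
tilted distribution is at least `exp (-1/λ)` times the counterfactual detection rate. -/
theorem tilted_detection_rate_ge
    (d : ℕ) (r β : Fin d → ℝ)
    (hr : ∀ i, 0 < r i) (hr1 : ∑ i, r i = 1)
    (hβ : ∀ i, 0 ≤ β i ∧ β i ≤ 1)
    (lam : ℝ) (hlam : 0 < lam)
    (sstar : Fin d → ℝ)
    (hsstar : ∀ i, sstar i =
      r i * Real.exp (-(β i) / lam) / ∑ j, r j * Real.exp (-(β j) / lam)) :
    Real.exp (-1 / lam) * ∑ i, r i * β i ≤ ∑ i, sstar i * β i := by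
  rcases Nat.eq_zero_or_pos d with hd | hd
  · subst hd; simp
  set Z := ∑ j, r j * Real.exp (-(β j) / lam) with hZ
  have hZpos : 0 < Z := by
    apply Finset.sum_pos
    · intro i _
      exact mul_pos (hr i) (Real.exp_pos _)
    · exact Finset.univ_nonempty_iff.mpr (Fin.pos_iff_nonempty.mp hd)
  have hZle1 : Z ≤ 1 := by
    rw [← hr1]
    apply Finset.sum_le_sum
    intro i _
    nth_rewrite 2 [← mul_one (r i)]
    apply mul_le_mul_of_nonneg_left _ (hr i).le
    rw [← Real.exp_zero]
    apply Real.exp_le_exp.mpr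
    exact div_nonpos_of_nonpos_of_nonneg (neg_nonpos.mpr (hβ i).1) hlam.le
  have step1 : ∑ i, r i * Real.exp (-(β i) / lam) * β i ≤ ∑ i, sstar i * β i := by
    apply Finset.sum_le_sum
    intro i _
    rw [hsstar i]
    have ha : 0 ≤ r i * Real.exp (-(β i) / lam) :=
      mul_nonneg (hr i).le (Real.exp_pos _).le
    exact mul_le_mul_of_nonneg_right (le_div_self ha hZpos hZle1) (hβ i).1
  refine le_trans ?_ step1
  rw [Finset.mul_sum]
  apply Finset.sum_le_sum
  intro i _
  have he : Real.exp (-1 / lam) ≤ Real.exp (-(β i) / lam) := by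
    apply Real.exp_le_exp.mpr
    gcongr
    linarith [(hβ i).2]
  calc Real.exp (-1 / lam) * (r i * β i)
      ≤ Real.exp (-(β i) / lam) * (r i * β i) :=
        mul_le_mul_of_nonneg_right he (mul_nonneg (hr i).le (hβ i).1)
    _ = r i * Real.exp (-(β i) / lam) * β i := by ring
end

section
/- Let ρ₀, ρ₁ be density matrices on ℂ^d, let τ > 0, and let Π* be the spectral projection of the Hermitian matrix ρ₁ − τ ρ₀ onto its positive eigenspace. Then for every matrix Π with 0 ≤ Π ≤ I, the quantity Re Tr(Π ρ₁) − τ · Re Tr(Π ρ₀) (the detection rate minus τ times the false alarm rate) is maximized at Π = Π*, i.e., Re Tr(Π ρ₁) − τ Re Tr(Π ρ₀) ≤ Re Tr(Π* ρ₁) − τ Re Tr(Π* ρ₀). -/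
open Matrix Finset ComplexOrder

/-- The spectral projection of a matrix onto the span of its eigenvectors with positive
eigenvalues (`∑_{j : η_j > 0} |η_j⟩⟨η_j|`), defined to be `0` if the matrix is not Hermitian. -/
noncomputable def posEigenProjection {d : ℕ} (A : Matrix (Fin d) (Fin d) ℂ) :
    Matrix (Fin d) (Fin d) ℂ :=
  if hA : A.IsHermitian then
    (hA.eigenvectorUnitary : Matrix (Fin d) (Fin d) ℂ) *
      Matrix.diagonal (fun j => if 0 < hA.eigenvalues j then (1 : ℂ) else 0) *
      star (hA.eigenvectorUnitary : Matrix (Fin d) (Fin d) ℂ)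
  else 0

/-!
Diagonalize `A = ρ₁ - τ ρ₀ = U diag(η) Uᴴ`. For any `P`, `Re Tr(P A) = ∑ⱼ (Uᴴ P U)ⱼⱼ ηⱼ`, and
`0 ≤ P ≤ 1` forces each diagonal entry `(Uᴴ P U)ⱼⱼ` into `[0, 1]`, so `Re Tr(P A) ≤ ∑ⱼ max ηⱼ 0`.
The spectral projection has `Uᴴ Π* U` diagonal with entries `1` exactly where `ηⱼ > 0`, so it
attains this bound.
-/

namespace Matrix

variable {n 𝕜 : Type*} [RCLike 𝕜]

lemma PosSemidef.re_diag_le_one [DecidableEq n] {B : Matrix n n 𝕜} (hB : (1 - B).PosSemidef)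
    (j : n) :
    RCLike.re (B j j) ≤ 1 := by
  have h := RCLike.nonneg_iff.mp (hB.diag_nonneg (i := j))
  simp only [sub_apply, one_apply_eq, map_sub, RCLike.one_re] at h
  linarith [h.1]

variable [Fintype n]

lemma re_trace_mul_sub_real_smul (Q B C : Matrix n n ℂ) (τ : ℝ) :
    (Q * (B - (τ : ℂ) • C)).trace.re = (Q * B).trace.re - τ * (Q * C).trace.re := by
  simp [Matrix.mul_sub, trace_sub]

variable [DecidableEq n]

lemma IsHermitian.trace_mul_eq_sum_diag_mul_eigenvalues {A : Matrix n n 𝕜}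
    (hA : A.IsHermitian) (Q : Matrix n n 𝕜) :
    (Q * A).trace = ∑ j, (star (hA.eigenvectorUnitary : Matrix n n 𝕜) * Q *
      hA.eigenvectorUnitary) j j * hA.eigenvalues j := by
  conv_lhs => rw [hA.spectral_theorem, Unitary.conjStarAlgAut_apply]
  rw [← Matrix.mul_assoc, ← Matrix.mul_assoc, trace_mul_cycle, ← Matrix.mul_assoc]
  simp [trace, mul_diagonal]

lemma IsHermitian.re_trace_mul_le_sum_max_eigenvalues {A : Matrix n n 𝕜} (hA : A.IsHermitian)
    {P : Matrix n n 𝕜} (hP : P.PosSemidef) (hP' : (1 - P).PosSemidef) :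
    RCLike.re (P * A).trace ≤ ∑ j, max (hA.eigenvalues j) 0 := by
  set U : Matrix n n 𝕜 := (hA.eigenvectorUnitary : Matrix n n 𝕜)
  have hPU : (star U * P * U).PosSemidef := hP.conjTranspose_mul_mul_same U
  have hPU' : (1 - star U * P * U).PosSemidef := by
    have h := hP'.conjTranspose_mul_mul_same U
    rwa [Matrix.mul_sub, Matrix.sub_mul, Matrix.mul_one, ← star_eq_conjTranspose,
      Unitary.coe_star_mul_self] at h
  rw [hA.trace_mul_eq_sum_diag_mul_eigenvalues, map_sum]
  refine sum_le_sum fun j _ => ?_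
  have h0 : 0 ≤ RCLike.re ((star U * P * U) j j) := (RCLike.nonneg_iff.mp hPU.diag_nonneg).1
  have h1 := hPU'.re_diag_le_one j
  rw [RCLike.re_mul_ofReal]
  rcases le_total (hA.eigenvalues j) 0 with hη | hη
  · rw [max_eq_right hη]; nlinarith
  · rw [max_eq_left hη]; nlinarith

end Matrix

namespace Matrix.IsHermitian

variable {d : ℕ} {A : Matrix (Fin d) (Fin d) ℂ}

lemma trace_posEigenProjection_mul_self (hA : A.IsHermitian) :
    (posEigenProjection A * A).trace = ∑ j, ((max (hA.eigenvalues j) 0 : ℝ) : ℂ) := by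
  set U : Matrix (Fin d) (Fin d) ℂ := (hA.eigenvectorUnitary : Matrix (Fin d) (Fin d) ℂ)
  have hU : star U * U = 1 := Unitary.coe_star_mul_self _
  rw [hA.trace_mul_eq_sum_diag_mul_eigenvalues, posEigenProjection, dif_pos hA]
  refine sum_congr rfl fun j _ => ?_
  rw [show star U * (U * _ * star U) * U = (star U * U) * _ * (star U * U) by noncomm_ring, hU]
  rw [Matrix.one_mul, Matrix.mul_one, diagonal_apply_eq]
  split_ifs with hη
  · simp [hη.le]
  · simp [not_lt.mp hη]

theorem re_trace_mul_le_re_trace_posEigenProjection_mul (hA : A.IsHermitian)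
    {P : Matrix (Fin d) (Fin d) ℂ} (hP : P.PosSemidef) (hP' : (1 - P).PosSemidef) :
    (P * A).trace.re ≤ (posEigenProjection A * A).trace.re := by
  rw [hA.trace_posEigenProjection_mul_self, Complex.re_sum]
  simpa using hA.re_trace_mul_le_sum_max_eigenvalues hP hP'

end Matrix.IsHermitian

theorem detection_minus_false_alarm_maximized_by_spectral_projection_general
    (d : ℕ) (ρ₀ ρ₁ : Matrix (Fin d) (Fin d) ℂ)
    (hρ₀ : ρ₀.PosSemidef)
    (hρ₁ : ρ₁.PosSemidef)
    (τ : ℝ) :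
    ∀ P : Matrix (Fin d) (Fin d) ℂ, P.PosSemidef → (1 - P).PosSemidef →
      (P * ρ₁).trace.re - τ * (P * ρ₀).trace.re ≤
        (posEigenProjection (ρ₁ - (τ : ℂ) • ρ₀) * ρ₁).trace.re -
          τ * (posEigenProjection (ρ₁ - (τ : ℂ) • ρ₀) * ρ₀).trace.re := by
  intro P hP hP'
  have hA : (ρ₁ - (τ : ℂ) • ρ₀).IsHermitian :=
    hρ₁.isHermitian.sub (hρ₀.isHermitian.smul (Complex.conj_ofReal τ))
  simpa only [re_trace_mul_sub_real_smul] using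
    hA.re_trace_mul_le_re_trace_posEigenProjection_mul hP hP'

/-- The spectral projection `Π*` of `ρ₁ − τ ρ₀` onto its positive eigenspace maximizes the
detection rate minus `τ` times the false alarm rate, `Re Tr(Π ρ₁) − τ Re Tr(Π ρ₀)`, over all
measurement operators `0 ≤ Π ≤ I`. -/
theorem detection_minus_false_alarm_maximized_by_spectral_projection
    (d : ℕ) (ρ₀ ρ₁ : Matrix (Fin d) (Fin d) ℂ)
    (hρ₀ : ρ₀.PosSemidef) (hρ₀tr : ρ₀.trace = 1)
    (hρ₁ : ρ₁.PosSemidef) (hρ₁tr : ρ₁.trace = 1)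
    (τ : ℝ) (hτ : 0 < τ) :
    ∀ P : Matrix (Fin d) (Fin d) ℂ, P.PosSemidef → (1 - P).PosSemidef →
      (P * ρ₁).trace.re - τ * (P * ρ₀).trace.re ≤
        (posEigenProjection (ρ₁ - (τ : ℂ) • ρ₀) * ρ₁).trace.re -
          τ * (posEigenProjection (ρ₁ - (τ : ℂ) • ρ₀) * ρ₀).trace.re :=
  detection_minus_false_alarm_maximized_by_spectral_projection_general d ρ₀ ρ₁ hρ₀ hρ₁ τ
end
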